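/- arXiv:2503.09260 — 3 statements merged into one kernel-verified Lean document; each statement's English description precedes it below -/
import Mathlib

section
/- Let Y ∈ ℝ^{n×k} be a matrix with all entries y_{iℓ} ∈ [0,1] and each row summing to 1. Let D ∈ ℝ^{n×n} be a diagonal matrix with D_{ii} > 0 for all i. Define the estimated volumes ṽol_ℓ := Σ_{i=1}^n y_{iℓ}·D_{ii}, assume ṽol_ℓ > 0 for every ℓ ∈ {1,…,k}, set Λ := Diag(ṽol_1,…,ṽol_k)^{1/2}, and let H̃ := Y·Λ^{-1}. Then the orthogonality condition H̃ᵀ D H̃ = I_k holds if and only if every entry of Y lies in {0,1} (i.e., Y is a binary clustering membership matrix, so each row of Y is a one-hot vector). -/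
open Matrix

/-- Theorem 1 of the paper: with `Y` a soft clustering membership matrix (entries in `[0,1]`,
rows summing to `1`), `D = diagonal d` with positive diagonal entries, estimated volumes
`vol ℓ = ∑ i, Y i ℓ * d i` assumed positive, `Λ = Diag(vol)^{1/2}` and `H̃ = Y Λ⁻¹`,
the orthogonality `H̃ᵀ D H̃ = I` holds iff every entry of `Y` lies in `{0,1}`. -/
theorem neuncut_orthogonality_iff_binary
    (n k : ℕ) (Y : Matrix (Fin n) (Fin k) ℝ)
    (hY0 : ∀ i ℓ, 0 ≤ Y i ℓ) (hY1 : ∀ i ℓ, Y i ℓ ≤ 1)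
    (hrow : ∀ i, ∑ ℓ, Y i ℓ = 1)
    (d : Fin n → ℝ) (hd : ∀ i, 0 < d i)
    (vol : Fin k → ℝ) (hvol : ∀ ℓ, vol ℓ = ∑ i, Y i ℓ * d i)
    (hvolpos : ∀ ℓ, 0 < vol ℓ)
    (Λ : Matrix (Fin k) (Fin k) ℝ)
    (hΛ : Λ = Matrix.diagonal fun ℓ => Real.sqrt (vol ℓ))
    (H : Matrix (Fin n) (Fin k) ℝ) (hH : H = Y * Λ⁻¹) :
    Hᵀ * Matrix.diagonal d * H = 1 ↔ ∀ i ℓ, Y i ℓ = 0 ∨ Y i ℓ = 1 := by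
  have hsq : ∀ ℓ, (0:ℝ) < Real.sqrt (vol ℓ) := fun ℓ => Real.sqrt_pos.mpr (hvolpos ℓ)
  have hs2 : ∀ ℓ, Real.sqrt (vol ℓ) * Real.sqrt (vol ℓ) = vol ℓ :=
    fun ℓ => Real.mul_self_sqrt (hvolpos ℓ).le
  have hΛinv : Λ⁻¹ = Matrix.diagonal fun ℓ => (Real.sqrt (vol ℓ))⁻¹ :=
    Matrix.inv_eq_right_inv (by
      rw [hΛ, Matrix.diagonal_mul_diagonal]
      have h1 : (fun ℓ => Real.sqrt (vol ℓ) * (Real.sqrt (vol ℓ))⁻¹) = fun _ => (1:ℝ) :=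
        funext fun x => mul_inv_cancel₀ (hsq x).ne'
      rw [h1, Matrix.diagonal_one])
  have hHent : ∀ i ℓ, H i ℓ = Y i ℓ * (Real.sqrt (vol ℓ))⁻¹ := by
    intro i ℓ
    rw [hH, hΛinv, Matrix.mul_diagonal]
  have hE : ∀ ℓ m, (Hᵀ * Matrix.diagonal d * H) ℓ m
      = ∑ i, (Y i ℓ * (Real.sqrt (vol ℓ))⁻¹) * d i * (Y i m * (Real.sqrt (vol m))⁻¹) := by
    intro ℓ m
    rw [Matrix.mul_apply]
    refine Finset.sum_congr rfl fun i _ => ?_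
    rw [Matrix.mul_diagonal, Matrix.transpose_apply, hHent, hHent]
  constructor
  · intro heq i ℓ
    have hd1 := congrFun (congrFun heq ℓ) ℓ
    rw [hE] at hd1
    have hone : (1 : Matrix (Fin k) (Fin k) ℝ) ℓ ℓ = 1 := Matrix.one_apply_eq ℓ
    rw [hone] at hd1
    have hfac : ∑ j, (Y j ℓ * (Real.sqrt (vol ℓ))⁻¹) * d j * (Y j ℓ * (Real.sqrt (vol ℓ))⁻¹)
        = (∑ j, Y j ℓ ^ 2 * d j) * ((Real.sqrt (vol ℓ))⁻¹ * (Real.sqrt (vol ℓ))⁻¹) := by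
      rw [Finset.sum_mul]
      exact Finset.sum_congr rfl fun j _ => by ring
    rw [hfac] at hd1
    have hsum : ∑ j, Y j ℓ ^ 2 * d j = vol ℓ := by
      have hs0 : Real.sqrt (vol ℓ) ≠ 0 := (hsq ℓ).ne'
      have key : (∑ j, Y j ℓ ^ 2 * d j)
          = ((∑ j, Y j ℓ ^ 2 * d j) * ((Real.sqrt (vol ℓ))⁻¹ * (Real.sqrt (vol ℓ))⁻¹))
            * (Real.sqrt (vol ℓ) * Real.sqrt (vol ℓ)) := by
        field_simp
      rw [hd1, one_mul, hs2 ℓ] at key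
      exact key
    have hzero : ∑ j, (Y j ℓ - Y j ℓ ^ 2) * d j = 0 := by
      have : ∑ j, (Y j ℓ - Y j ℓ ^ 2) * d j
          = (∑ j, Y j ℓ * d j) - (∑ j, Y j ℓ ^ 2 * d j) := by
        rw [← Finset.sum_sub_distrib]
        exact Finset.sum_congr rfl fun j _ => by ring
      rw [this, hsum, ← hvol ℓ, sub_self]
    have hnn : ∀ j ∈ Finset.univ, (0:ℝ) ≤ (Y j ℓ - Y j ℓ ^ 2) * d j := by
      intro j _
      have : 0 ≤ Y j ℓ - Y j ℓ ^ 2 := by nlinarith [hY0 j ℓ, hY1 j ℓ]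
      exact mul_nonneg this (hd j).le
    have hterm := (Finset.sum_eq_zero_iff_of_nonneg hnn).mp hzero i (Finset.mem_univ i)
    have : Y i ℓ - Y i ℓ ^ 2 = 0 := by
      rcases mul_eq_zero.mp hterm with h | h
      · exact h
      · exact absurd h (hd i).ne'
    have : Y i ℓ * (1 - Y i ℓ) = 0 := by nlinarith [this]
    rcases mul_eq_zero.mp this with h | h
    · exact Or.inl h
    · exact Or.inr (by linarith)
  · intro hbin
    have hprod : ∀ i ℓ m, ℓ ≠ m → Y i ℓ * Y i m = 0 := by
      intro i ℓ m hne
      rcases hbin i ℓ with h1 | h1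
      · rw [h1, zero_mul]
      rcases hbin i m with h2 | h2
      · rw [h2, mul_zero]
      exfalso
      have hle : Y i ℓ + Y i m ≤ 1 := by
        calc Y i ℓ + Y i m = ∑ x ∈ ({ℓ, m} : Finset (Fin k)), Y i x :=
              (Finset.sum_pair hne).symm
          _ ≤ ∑ x, Y i x := Finset.sum_le_sum_of_subset_of_nonneg
              (Finset.subset_univ _) (fun x _ _ => hY0 i x)
          _ = 1 := hrow i
      rw [h1, h2] at hle
      linarith
    ext ℓ m
    rw [hE]
    by_cases hlm : ℓ = m
    · subst hlm
      rw [Matrix.one_apply_eq]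
      have hsq' : ∀ j, Y j ℓ ^ 2 = Y j ℓ := by
        intro j
        rcases hbin j ℓ with h | h <;> rw [h] <;> ring
      have hfac : ∑ j, (Y j ℓ * (Real.sqrt (vol ℓ))⁻¹) * d j * (Y j ℓ * (Real.sqrt (vol ℓ))⁻¹)
          = (∑ j, Y j ℓ * d j) * ((Real.sqrt (vol ℓ))⁻¹ * (Real.sqrt (vol ℓ))⁻¹) := by
        rw [Finset.sum_mul]
        refine Finset.sum_congr rfl fun j _ => ?_
        linear_combination (d j * ((Real.sqrt (vol ℓ))⁻¹ * (Real.sqrt (vol ℓ))⁻¹)) * (hsq' j)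
      rw [hfac, ← hvol ℓ, ← hs2 ℓ]
      field_simp
      rw [Real.sq_sqrt (sq_nonneg (Real.sqrt (vol ℓ)))]
      exact div_self (pow_pos (hsq ℓ) 2).ne'
    · rw [Matrix.one_apply_ne hlm]
      apply Finset.sum_eq_zero
      intro j _
      have := hprod j ℓ m hlm
      calc (Y j ℓ * (Real.sqrt (vol ℓ))⁻¹) * d j * (Y j m * (Real.sqrt (vol m))⁻¹)
          = (Y j ℓ * Y j m) * ((Real.sqrt (vol ℓ))⁻¹ * d j * (Real.sqrt (vol m))⁻¹) := by ring
        _ = 0 := by rw [this, zero_mul]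
end

section
/- Let Y ∈ ℝ^{n×k} be a matrix with all entries y_{iℓ} ∈ [0,1], and let D ∈ ℝ^{n×n} be a diagonal matrix with D_{ii} > 0 for all i. Suppose for every column ℓ ∈ {1,…,k} that Σ_{i=1}^n D_{ii}·y_{iℓ}² = Σ_{i=1}^n D_{ii}·y_{iℓ} and Σ_{i=1}^n D_{ii}·y_{iℓ} > 0. Then every entry of Y lies in {0,1}. -/
/-- Forward direction of Theorem 1 of the paper: if `Y` has entries in `[0,1]`, `D` is diagonal
with positive entries `d i`, and for every column `ℓ` we have
`∑ i, d i * (Y i ℓ)^2 = ∑ i, d i * Y i ℓ` with `∑ i, d i * Y i ℓ > 0`,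
then every entry of `Y` lies in `{0,1}`. -/
theorem binary_of_column_sums_eq
    (n k : ℕ) (Y : Matrix (Fin n) (Fin k) ℝ)
    (hY0 : ∀ i ℓ, 0 ≤ Y i ℓ) (hY1 : ∀ i ℓ, Y i ℓ ≤ 1)
    (d : Fin n → ℝ) (hd : ∀ i, 0 < d i)
    (heq : ∀ ℓ, ∑ i, d i * (Y i ℓ) ^ 2 = ∑ i, d i * Y i ℓ)
    (hpos : ∀ ℓ, 0 < ∑ i, d i * Y i ℓ) :
    ∀ i ℓ, Y i ℓ = 0 ∨ Y i ℓ = 1 := by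
  intro i ℓ
  have hsum : ∑ j, d j * (Y j ℓ - (Y j ℓ) ^ 2) = 0 := by
    have := heq ℓ
    simp only [mul_sub]
    rw [Finset.sum_sub_distrib, this, sub_self]
  have hterm : ∀ j ∈ Finset.univ, 0 ≤ d j * (Y j ℓ - (Y j ℓ) ^ 2) := by
    intro j _
    apply mul_nonneg (hd j).le
    nlinarith [hY0 j ℓ, hY1 j ℓ]
  have := (Finset.sum_eq_zero_iff_of_nonneg hterm).mp hsum i (Finset.mem_univ i)
  have h0 : Y i ℓ - (Y i ℓ) ^ 2 = 0 := by
    rcases mul_eq_zero.mp this with h | h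
    · exact absurd h (hd i).ne'
    · exact h
  have : Y i ℓ * (1 - Y i ℓ) = 0 := by nlinarith
  rcases mul_eq_zero.mp this with h | h
  · exact Or.inl h
  · exact Or.inr (by linarith)
end

section
/- Let Y ∈ ℝ^{n×k} be a matrix with all entries y_{iℓ} ∈ [0,1] and each row summing to 1. Define the estimated cluster sizes s_ℓ := Σ_{i=1}^n y_{iℓ}, assume s_ℓ > 0 for every ℓ, set Υ := Diag(s_1,…,s_k)^{1/2}, and let H̃ := Y·Υ^{-1}. Then H̃ᵀ H̃ = I_k holds if and only if every entry of Y lies in {0,1} (i.e., each row of Y is a one-hot vector). -/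
open Matrix

/-- Ratio cut (NeuRcut) analogue of Theorem 1 of the paper: with `Y` a soft clustering
membership matrix (entries in `[0,1]`, rows summing to `1`), estimated cluster sizes
`s ℓ = ∑ i, Y i ℓ` assumed positive, `Υ = Diag(s)^{1/2}` and `H̃ = Y Υ⁻¹`,
one has `H̃ᵀ H̃ = I` iff every entry of `Y` lies in `{0,1}`. -/
theorem neurcut_orthogonality_iff_binary
    (n k : ℕ) (Y : Matrix (Fin n) (Fin k) ℝ)
    (hY0 : ∀ i ℓ, 0 ≤ Y i ℓ) (hY1 : ∀ i ℓ, Y i ℓ ≤ 1)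
    (hrow : ∀ i, ∑ ℓ, Y i ℓ = 1)
    (s : Fin k → ℝ) (hs : ∀ ℓ, s ℓ = ∑ i, Y i ℓ)
    (hspos : ∀ ℓ, 0 < s ℓ)
    (Υ : Matrix (Fin k) (Fin k) ℝ)
    (hΥ : Υ = Matrix.diagonal fun ℓ => Real.sqrt (s ℓ))
    (H : Matrix (Fin n) (Fin k) ℝ) (hH : H = Y * Υ⁻¹) :
    Hᵀ * H = 1 ↔ ∀ i ℓ, Y i ℓ = 0 ∨ Y i ℓ = 1 := by
  have hsq : ∀ ℓ, Real.sqrt (s ℓ) * Real.sqrt (s ℓ) = s ℓ := fun ℓ =>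
    Real.mul_self_sqrt (hspos ℓ).le
  have hsqpos : ∀ ℓ, 0 < Real.sqrt (s ℓ) := fun ℓ => Real.sqrt_pos.2 (hspos ℓ)
  have hΥinv : Υ⁻¹ = Matrix.diagonal fun ℓ => (Real.sqrt (s ℓ))⁻¹ := by
    refine Matrix.inv_eq_right_inv ?_
    rw [hΥ, Matrix.diagonal_mul_diagonal, ← Matrix.diagonal_one]
    funext ℓ m
    simp only [Matrix.diagonal, Matrix.of_apply]
    split
    · exact mul_inv_cancel₀ (hsqpos ℓ).ne'
    · rfl
  have hHe : ∀ i ℓ, H i ℓ = Y i ℓ * (Real.sqrt (s ℓ))⁻¹ := by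
    intro i ℓ
    rw [hH, hΥinv, Matrix.mul_diagonal]
  have hentry : ∀ ℓ m, (Hᵀ * H) ℓ m =
      (Real.sqrt (s ℓ))⁻¹ * (Real.sqrt (s m))⁻¹ * ∑ i, Y i ℓ * Y i m := by
    intro ℓ m
    rw [Matrix.mul_apply, Finset.mul_sum]
    refine Finset.sum_congr rfl fun i _ => ?_
    simp only [Matrix.transpose_apply, hHe]
    ring
  constructor
  · intro hI i ℓ
    have hdiag : ∑ j, Y j ℓ * Y j ℓ = s ℓ := by
      have h1 : (Hᵀ * H) ℓ ℓ = 1 := by rw [hI]; simp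
      rw [hentry] at h1
      have hne : Real.sqrt (s ℓ) ≠ 0 := (hsqpos ℓ).ne'
      have : ∑ j, Y j ℓ * Y j ℓ = Real.sqrt (s ℓ) * Real.sqrt (s ℓ) := by
        field_simp at h1
        simp only [sq] at h1
        linarith [h1]
      rw [this, hsq]
    -- ∑ j, Y j ℓ * (1 - Y j ℓ) = 0 with nonneg terms
    have hzero : ∑ j, Y j ℓ * (1 - Y j ℓ) = 0 := by
      have : ∑ j, Y j ℓ * (1 - Y j ℓ) = (∑ j, Y j ℓ) - ∑ j, Y j ℓ * Y j ℓ := by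
        rw [← Finset.sum_sub_distrib]
        refine Finset.sum_congr rfl fun j _ => by ring
      rw [this, hdiag, ← hs]
      ring
    have hterm : ∀ j ∈ Finset.univ, (0:ℝ) ≤ Y j ℓ * (1 - Y j ℓ) := fun j _ =>
      mul_nonneg (hY0 j ℓ) (by linarith [hY1 j ℓ])
    have := (Finset.sum_eq_zero_iff_of_nonneg hterm).1 hzero i (Finset.mem_univ i)
    rcases mul_eq_zero.1 this with h | h
    · exact Or.inl h
    · exact Or.inr (by linarith)
  · intro hbin
    ext ℓ m
    rw [hentry]
    by_cases hlm : ℓ = m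
    · subst hlm
      have : ∑ i, Y i ℓ * Y i ℓ = s ℓ := by
        rw [hs]
        refine Finset.sum_congr rfl fun i _ => ?_
        rcases hbin i ℓ with h | h <;> rw [h] <;> ring
      rw [this]
      have hne : Real.sqrt (s ℓ) ≠ 0 := (hsqpos ℓ).ne'
      simp only [Matrix.one_apply_eq]
      field_simp
      rw [sq, hsq]
    · have : ∑ i, Y i ℓ * Y i m = 0 := by
        refine Finset.sum_eq_zero fun i _ => ?_
        rcases hbin i ℓ with h | h
        · rw [h]; ring
        · have hm0 : Y i m = 0 := by
            have hsum : ∑ j ∈ Finset.univ.erase ℓ, Y i j = 0 := by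
              have := Finset.add_sum_erase Finset.univ (Y i) (Finset.mem_univ ℓ)
              rw [hrow i] at this
              linarith [this, h]
            have hle : Y i m ≤ ∑ j ∈ Finset.univ.erase ℓ, Y i j :=
              Finset.single_le_sum (fun j _ => hY0 i j)
                (Finset.mem_erase.2 ⟨fun hh => hlm hh.symm, Finset.mem_univ m⟩)
            linarith [hY0 i m]
          rw [hm0]; ring
      rw [this, Matrix.one_apply_ne hlm]
      ring
end
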